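/- arXiv:2006.14417 — 3 statements merged into one kernel-verified Lean document; each statement's English description precedes it below -/
import Mathlib

section
/- The element σ = (φ⁻¹ + i + φ·j)/2, where φ = (1+√5)/2 is the golden ratio, is a unit quaternion of order 5. -/
open Quaternion

/-- The golden ratio `φ = (1 + √5)/2`. -/
noncomputable def φ : ℝ := (1 + Real.sqrt 5) / 2

/-- The element `σ = (φ⁻¹ + i + φ·j)/2`. -/
noncomputable def σq : ℍ[ℝ] := ⟨φ⁻¹ / 2, 1 / 2, φ / 2, 0⟩

lemma phi_sq : φ ^ 2 = φ + 1 := by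
  have hs : Real.sqrt 5 ^ 2 = 5 := Real.sq_sqrt (by norm_num)
  unfold φ; nlinarith [hs]

lemma phi_pos : 0 < φ := by
  have := Real.sqrt_nonneg 5
  unfold φ; linarith

lemma phi_inv : φ⁻¹ = φ - 1 := by
  have h : φ * (φ - 1) = 1 := by nlinarith [phi_sq]
  exact inv_eq_of_mul_eq_one_right h

lemma sigma_eq : @Eq ℍ[ℝ] σq ⟨(φ - 1) / 2, 1 / 2, φ / 2, 0⟩ := by
  unfold σq; rw [phi_inv]

lemma sigma_pow_five : σq ^ 5 = 1 := by
  have h := phi_sq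
  rw [show (5 : ℕ) = 4 + 1 from rfl, pow_succ,
    show (4 : ℕ) = 3 + 1 from rfl, pow_succ,
    show (3 : ℕ) = 2 + 1 from rfl, pow_succ, pow_two]
  refine Quaternion.ext _ _ ?_ ?_ ?_ ?_ <;>
    simp only [Quaternion.re_mul, Quaternion.imI_mul, Quaternion.imJ_mul,
      Quaternion.imK_mul, Quaternion.re_one, Quaternion.imI_one,
      Quaternion.imJ_one, Quaternion.imK_one] <;>
    simp only [σq, phi_inv]
  · linear_combination (-(1:ℝ)/8 * φ^3 + 1/2 * φ^2 - 1/4 * φ + 7/8) * h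
  · linear_combination (-(1:ℝ)/8 * φ^2 - 1/8 * φ + 1/8) * h
  · linear_combination (-(1:ℝ)/8 * φ^3 - 1/8 * φ^2 + 1/8 * φ) * h
  · ring

/-- `σ = (φ⁻¹ + i + φj)/2` is a unit quaternion of order 5. -/
theorem sigma_norm_one_and_orderOf_eq_five : ‖σq‖ = 1 ∧ orderOf σq = 5 := by
  constructor
  · have hn : normSq σq = 1 := by
      rw [Quaternion.normSq_def', sigma_eq]
      nlinarith [phi_sq]
    have := Quaternion.normSq_eq_norm_mul_self σq
    nlinarith [norm_nonneg σq]
  · haveI : Fact (Nat.Prime 5) := ⟨by norm_num⟩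
    refine orderOf_eq_prime sigma_pow_five ?_
    intro h
    have : σq.imI = (1 : ℍ[ℝ]).imI := by rw [h]
    simp [σq] at this
end

section
/- Let G ⊂ O(n) be a finite group acting freely on S^{n−1} and let 𝒫 be the orbit polytope of a point v₀ whose orbit spans ℝⁿ. Then G acts freely on the set of d-dimensional faces of 𝒫 for every 0 ≤ d < dim 𝒫; that is, if F is a proper face of 𝒫 and g ∈ G satisfies gF = F, then g = 1. -/
/-- Let `G ⊂ O(n)` be a finite group acting freely on the unit sphere and `𝒫 = conv(G·v₀)` the
orbit polytope of a unit vector `v₀` whose orbit spans `ℝⁿ`. Then `G` acts freely on the proper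
(exposed) faces of `𝒫`: if `F` is a nonempty proper face of `𝒫` and `g ∈ G` satisfies
`gF = F`, then `g = 1`. -/
theorem orbitPolytope_free_action_on_faces (n : ℕ)
    (G : Subgroup (EuclideanSpace ℝ (Fin n) ≃ₗᵢ[ℝ] EuclideanSpace ℝ (Fin n))) [Finite G]
    (hfree : ∀ g ∈ G, g ≠ 1 → ∀ x : EuclideanSpace ℝ (Fin n), ‖x‖ = 1 → g x ≠ x)
    (v₀ : EuclideanSpace ℝ (Fin n)) (hv₀ : ‖v₀‖ = 1)
    (hspan : Submodule.span ℝ {x : EuclideanSpace ℝ (Fin n) | ∃ g ∈ G, g v₀ = x} = ⊤)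
    (P : Set (EuclideanSpace ℝ (Fin n)))
    (hP : P = convexHull ℝ {x : EuclideanSpace ℝ (Fin n) | ∃ g ∈ G, g v₀ = x})
    (F : Set (EuclideanSpace ℝ (Fin n))) (hF : IsExposed ℝ P F)
    (hFne : F.Nonempty) (hFproper : F ≠ P)
    (g : EuclideanSpace ℝ (Fin n) ≃ₗᵢ[ℝ] EuclideanSpace ℝ (Fin n)) (hg : g ∈ G)
    (hgF : (⇑g) '' F = F) :
    g = 1 := by
  classical
  by_contra hne
  set S : Set (EuclideanSpace ℝ (Fin n)) := {x : EuclideanSpace ℝ (Fin n) | ∃ g ∈ G, g v₀ = x} with hS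
  -- any g-fixed vector is zero
  have hfix : ∀ v : EuclideanSpace ℝ (Fin n), g v = v → v = 0 := by
    intro v hv
    by_contra hv0
    have hnorm : ‖(‖v‖⁻¹ • v)‖ = 1 := by
      rw [norm_smul, norm_inv, norm_norm, inv_mul_cancel₀ (norm_ne_zero_iff.mpr hv0)]
    exact hfree g hg hne _ hnorm (by rw [map_smul, hv])
  have hSfin : S.Finite := by
    have hrange : S = Set.range (fun h : G => (h : EuclideanSpace ℝ (Fin n) ≃ₗᵢ[ℝ] EuclideanSpace ℝ (Fin n)) v₀) := by
      ext x
      simp only [hS, Set.mem_setOf_eq, Set.mem_range]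
      exact ⟨fun ⟨a, ha, h⟩ => ⟨⟨a, ha⟩, h⟩, fun ⟨⟨a, ha⟩, h⟩ => ⟨a, ha, h⟩⟩
    rw [hrange]; exact Set.finite_range _
  have hgS : (⇑g) '' S = S := by
    apply Set.Subset.antisymm
    · rintro _ ⟨x, ⟨h, hh, rfl⟩, rfl⟩
      exact ⟨g * h, mul_mem hg hh, rfl⟩
    · rintro _ ⟨h, hh, rfl⟩
      exact ⟨(g⁻¹ * h : EuclideanSpace ℝ (Fin n) ≃ₗᵢ[ℝ] EuclideanSpace ℝ (Fin n)) v₀, ⟨g⁻¹ * h, mul_mem (inv_mem hg) hh, rfl⟩, by simp⟩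
  obtain ⟨l, hl⟩ := hF hFne
  obtain ⟨x₀, hx₀F⟩ := hFne
  have hFP : F ⊆ P := by rw [hl]; exact fun x hx => hx.1
  have hSP : S ⊆ P := by rw [hP]; exact subset_convexHull ℝ _
  set a := l x₀ with ha
  have hx₀F' := hx₀F
  rw [hl] at hx₀F'
  have hmax : ∀ y ∈ P, l y ≤ a := hx₀F'.2
  have hmemF : ∀ x ∈ P, l x = a → x ∈ F := by
    intro x hx hxa; rw [hl]; exact ⟨hx, fun y hy => hxa ▸ hmax y hy⟩
  have hSne : S.Nonempty := ⟨v₀, 1, one_mem G, rfl⟩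
  -- some orbit point attains the maximum a
  obtain ⟨z, hzS, hzmax⟩ := Set.exists_max_image S l hSfin hSne
  have hhalf : P ⊆ {x : EuclideanSpace ℝ (Fin n) | l x ≤ l z} := by
    rw [hP]
    exact convexHull_min (fun x hx => hzmax x hx)
      (convex_halfSpace_le ⟨l.map_add, l.map_smul⟩ (l z))
  have hza : l z = a := le_antisymm (hmax z (hSP hzS)) (hhalf (hFP hx₀F))
  set V : Set (EuclideanSpace ℝ (Fin n)) := S ∩ F with hV
  have hVfin : V.Finite := hSfin.inter_of_left F
  have hzV : z ∈ V := ⟨hzS, hmemF z (hSP hzS) hza⟩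
  have hgV : (⇑g) '' V = V := by
    rw [hV, Set.image_inter g.injective, hgS, hgF]
  have hVa : ∀ x ∈ V, l x = a := by
    intro x hx
    have hxF := hx.2
    rw [hl] at hxF
    exact le_antisymm (hmax x (hFP hx.2)) (hxF.2 x₀ (hFP hx₀F))
  -- sum over a g-invariant finite set is g-fixed
  have key : ∀ (W : Set (EuclideanSpace ℝ (Fin n))) (hW : W.Finite), (⇑g) '' W = W →
      g (∑ x ∈ hW.toFinset, x) = ∑ x ∈ hW.toFinset, x := by
    intro W hW hgW
    have hTg : hW.toFinset.image ⇑g = hW.toFinset := by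
      apply Finset.coe_injective
      rw [Finset.coe_image, Set.Finite.coe_toFinset]
      exact hgW
    calc g (∑ x ∈ hW.toFinset, x) = ∑ x ∈ hW.toFinset, g x := map_sum g _ _
      _ = ∑ y ∈ hW.toFinset.image ⇑g, y :=
          (Finset.sum_image (g := ⇑g) (f := fun y => y) (s := hW.toFinset)
            (fun x _ y _ h => g.injective h)).symm
      _ = ∑ x ∈ hW.toFinset, x := by rw [hTg]
  -- the orbit sum is zero
  have hSsum : (∑ x ∈ hSfin.toFinset, x) = 0 := hfix _ (key S hSfin hgS)
  -- some orbit point has l-value < a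
  have hex : ∃ y ∈ hSfin.toFinset, l y < a := by
    by_contra hno
    push_neg at hno
    apply hFproper
    apply Set.Subset.antisymm hFP
    intro p hp
    have h1 : l p ≤ a := hmax p hp
    have h2 : a ≤ l p := by
      have : P ⊆ {x : EuclideanSpace ℝ (Fin n) | a ≤ l x} := by
        rw [hP]
        refine convexHull_min (fun x hx => ?_)
          (convex_halfSpace_ge ⟨l.map_add, l.map_smul⟩ a)
        exact hno x (hSfin.mem_toFinset.mpr hx)
      exact this hp
    exact hmemF p hp (le_antisymm h1 h2)
  -- a > 0
  have hsumlt : (0 : ℝ) < (hSfin.toFinset.card : ℝ) * a := by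
    have h0 : (∑ x ∈ hSfin.toFinset, l x) = 0 := by
      rw [← map_sum, hSsum, map_zero]
    have hlt : (∑ x ∈ hSfin.toFinset, l x) < ∑ _x ∈ hSfin.toFinset, a := by
      obtain ⟨y, hy, hylt⟩ := hex
      exact Finset.sum_lt_sum (fun i hi => hmax i (hSP (hSfin.mem_toFinset.mp hi))) ⟨y, hy, hylt⟩
    rw [h0, Finset.sum_const, nsmul_eq_mul] at hlt
    exact hlt
  have hapos : 0 < a := by
    rcases le_or_gt a 0 with h | h
    · nlinarith [hsumlt, Nat.cast_nonneg (α := ℝ) hSfin.toFinset.card]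
    · exact h
  -- the sum over V is fixed, hence zero, but has positive l-value
  have hVsum : (∑ x ∈ hVfin.toFinset, x) = 0 := hfix _ (key V hVfin hgV)
  have hlV : l (∑ x ∈ hVfin.toFinset, x) = (hVfin.toFinset.card : ℝ) * a := by
    rw [map_sum]
    rw [Finset.sum_congr rfl (fun x hx => hVa x (hVfin.mem_toFinset.mp hx)),
      Finset.sum_const, nsmul_eq_mul]
  have hcard : 0 < hVfin.toFinset.card :=
    Finset.card_pos.mpr ⟨z, hVfin.mem_toFinset.mpr hzV⟩
  rw [hVsum, map_zero] at hlV
  have : (0 : ℝ) < (hVfin.toFinset.card : ℝ) * a := by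
    apply mul_pos _ hapos
    exact_mod_cast hcard
  linarith [hlV, this]
end

section
/- Let G ⊂ O(n) act freely on S^{n−1} with orbit polytope 𝒫 = conv(G·v₀). Let F₁, …, F_r be distinct facets of 𝒫, all containing v₀ as a vertex, and let V ⊆ G be defined by V·v₀ = vertices(F₁ ∪ … ∪ F_r). If V ∩ V⁻¹ = {1}, then the facets F₁, …, F_r lie in pairwise distinct G-orbits. -/
/-- Let `G ⊂ O(n)` act freely on the unit sphere with orbit polytope `𝒫 = conv(G·v₀)`, and let
`F₁, …, F_r` be distinct facets (proper exposed faces) of `𝒫`, all containing `v₀`. Let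
`V ⊆ G` correspond to the vertices of `F₁ ∪ ⋯ ∪ F_r`, i.e. `g ∈ V ↔ g·v₀ ∈ ⋃ Fᵢ`. If
`V ∩ V⁻¹ = {1}`, then the `Fᵢ` lie in pairwise distinct `G`-orbits. -/
theorem facets_in_distinct_orbits_of_V_inter_Vinv (n r : ℕ)
    (G : Subgroup (EuclideanSpace ℝ (Fin n) ≃ₗᵢ[ℝ] EuclideanSpace ℝ (Fin n))) [Finite G]
    (hfree : ∀ g ∈ G, g ≠ 1 → ∀ x : EuclideanSpace ℝ (Fin n), ‖x‖ = 1 → g x ≠ x)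
    (v₀ : EuclideanSpace ℝ (Fin n)) (hv₀ : ‖v₀‖ = 1)
    (hspan : Submodule.span ℝ {x : EuclideanSpace ℝ (Fin n) | ∃ g ∈ G, g v₀ = x} = ⊤)
    (P : Set (EuclideanSpace ℝ (Fin n)))
    (hP : P = convexHull ℝ {x : EuclideanSpace ℝ (Fin n) | ∃ g ∈ G, g v₀ = x})
    (F : Fin r → Set (EuclideanSpace ℝ (Fin n)))
    (hFinj : Function.Injective F)
    (hFexp : ∀ i, IsExposed ℝ P (F i)) (hFproper : ∀ i, F i ≠ P)
    (hv₀F : ∀ i, v₀ ∈ F i)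
    (hV : ∀ g ∈ G, g v₀ ∈ (⋃ i, F i) → g⁻¹ v₀ ∈ (⋃ i, F i) → g = 1) :
    ∀ i j : Fin r, ∀ g ∈ G, (⇑g) '' F i = F j → i = j := by
  intro i j g hg hgF
  have h1 : g v₀ ∈ ⋃ i, F i := Set.mem_iUnion.2 ⟨j, hgF ▸ Set.mem_image_of_mem _ (hv₀F i)⟩
  obtain ⟨x, hx, hgx⟩ : ∃ x ∈ F i, g x = v₀ := by
    have := hv₀F j; rw [← hgF] at this; exact this
  have h2 : g⁻¹ v₀ ∈ ⋃ i, F i := by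
    have : (g⁻¹ : _) v₀ = x := by
      rw [← hgx]; exact g.symm_apply_apply x
    exact Set.mem_iUnion.2 ⟨i, this ▸ hx⟩
  have hg1 : g = 1 := hV g hg h1 h2
  subst hg1
  apply hFinj
  simpa using hgF
end
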